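/- Let k ≥ 3, let r > 0, and let t : Fin k → EuclideanSpace ℝ (Fin n) be a tuple of pairwise distinct points with ‖t i‖ = r for all i that is collision-free. Then the number of equivalence classes—under the relation 's ≈ s' iff there exist g ∈ O(n) and a permutation σ of Fin k with s i = g (s' (σ i)) for all i'—of the set of tuples s : Fin k → EuclideanSpace ℝ (Fin n) of pairwise distinct points having the same second-moment data as t is at most (k choose 2)! / k! (read as a rational number). -/

import Mathlib

open RealInnerProductSpace
open scoped BigOperators

/-- Collision-free tuples. -/
def IsCollisionFree {n k : ℕ} (t : Fin k → EuclideanSpace ℝ (Fin n)) : Prop :=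
  ∀ i j l m : Fin k, i ≠ j → l ≠ m →
    (∃ g : EuclideanSpace ℝ (Fin n) ≃ₗᵢ[ℝ] EuclideanSpace ℝ (Fin n),
        ({g (t i), g (t j)} : Set (EuclideanSpace ℝ (Fin n))) = {t l, t m}) →
    ({t i, t j} : Set (EuclideanSpace ℝ (Fin n))) = {t l, t m}

/-- Pair data. -/
def pairData {n k : ℕ} (s : Fin k → EuclideanSpace ℝ (Fin n)) : Set (Sym2 ℝ × ℝ) :=
  { p | ∃ i j : Fin k, i < j ∧ p = (Sym2.mk (‖s i‖) (‖s j‖), ⟪s i, s j⟫) }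

/-- Norm data. -/
noncomputable def normData {n k : ℕ} (s : Fin k → EuclideanSpace ℝ (Fin n)) : Multiset ℝ :=
  Finset.univ.val.map fun i => ‖s i‖

/-- Same second-moment data. -/
def SameSecondMoment {n k : ℕ} (s t : Fin k → EuclideanSpace ℝ (Fin n)) : Prop :=
  normData s = normData t ∧ pairData s = pairData t

/-- `s ≈ s'` iff there exist `g ∈ O(n)` and a permutation `σ` of `Fin k`
with `s i = g (s' (σ i))` for all `i`. -/
def EquivRel {n k : ℕ} (S : Set (Fin k → EuclideanSpace ℝ (Fin n))) (s s' : S) : Prop :=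
  ∃ (g : EuclideanSpace ℝ (Fin n) ≃ₗᵢ[ℝ] EuclideanSpace ℝ (Fin n))
    (σ : Equiv.Perm (Fin k)),
    ∀ i : Fin k, (s : Fin k → EuclideanSpace ℝ (Fin n)) i
      = g ((s' : Fin k → EuclideanSpace ℝ (Fin n)) (σ i))

/-!
A tuple `s` with the same second-moment data as `t` has all its norms equal to `r`, so up to
`O(n)` it is determined by its inner products `⟪s i, s j⟫` over the `k choose 2` pairs `{i, j}`.
These take the same values as those of `t`, and for collision-free `t` the latter are pairwise
distinct (two pairs with equal inner product are exchanged by an isometry). Hence `s` determines a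
permutation `π_s` of the pairs with `⟪s i, s j⟫ = ⟪t l, t m⟫` whenever `π_s {i, j} = {l, m}`,
and relabelling `s` by `σ ∈ Sₖ` multiplies `π_s` on the right by the permutation of pairs induced
by `σ`. For `k ≥ 3` this induced action is faithful, so the classes inject into the coset space
`S_(k choose 2) / Sₖ`, of size `(k choose 2)! / k!`.
-/

open Function Equiv

section Gram

variable {E : Type*} [NormedAddCommGroup E] [InnerProductSpace ℝ E] [FiniteDimensional ℝ E]
  {ι : Type*} [Fintype ι]

theorem exists_linearIsometryEquiv_of_inner_eq {v w : ι → E}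
    (h : ∀ i j, ⟪v i, v j⟫ = ⟪w i, w j⟫) : ∃ g : E ≃ₗᵢ[ℝ] E, ∀ i, g (w i) = v i := by
  classical
  set A := Fintype.linearCombination ℝ v
  set B := Fintype.linearCombination ℝ w
  have hnorm : ∀ c, ‖A c‖ = ‖B c‖ := by
    intro c
    rw [← sq_eq_sq₀ (norm_nonneg _) (norm_nonneg _), ← real_inner_self_eq_norm_sq,
      ← real_inner_self_eq_norm_sq]
    simp only [A, B, Fintype.linearCombination_apply, inner_sum, sum_inner,
      real_inner_smul_left, real_inner_smul_right, h]
  obtain ⟨R, hR⟩ := B.rangeRestrict.exists_rightInverse_of_surjective B.range_rangeRestrict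
  have hBR : ∀ x, B (R x) = x := fun x => congrArg Subtype.val (LinearMap.congr_fun hR x)
  let L : LinearMap.range B →ₗᵢ[ℝ] E := ⟨A ∘ₗ R, fun x => by simp [hnorm, hBR]⟩
  refine ⟨L.extend.toLinearIsometryEquiv rfl, fun i => ?_⟩
  have hwi : w i ∈ LinearMap.range B := ⟨Pi.single i 1, by simp [B]⟩
  -- `A` and `B` have the same norms, hence the same kernel
  have hker : A (R ⟨w i, hwi⟩ - Pi.single i 1) = 0 := by
    rw [← norm_eq_zero, hnorm, map_sub, hBR]
    simp [B]
  rw [map_sub, sub_eq_zero] at hker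
  exact (L.extend_apply ⟨w i, hwi⟩).trans (hker.trans (by simp [A]))

end Gram

namespace Sym2

variable {α : Type*}

def offDiagPermHom (α : Type*) : Perm α →* Perm {z : Sym2 α // ¬z.IsDiag} where
  toFun σ :=
    { toFun z := ⟨z.1.map σ, by rw [isDiag_map σ.injective]; exact z.2⟩
      invFun z := ⟨z.1.map σ.symm, by rw [isDiag_map σ.symm.injective]; exact z.2⟩
      left_inv z := by ext1; simp [map_map]
      right_inv z := by ext1; simp [map_map] }
  map_one' := by ext1 z; ext1; simp
  map_mul' σ τ := by ext1 z; ext1; simp [map_map]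

@[simp]
theorem offDiagPermHom_mk (σ : Perm α) {i j : α} (h : ¬s(i, j).IsDiag) :
    offDiagPermHom α σ ⟨s(i, j), h⟩ = ⟨s(σ i, σ j), by simpa using h⟩ := rfl

theorem offDiagPermHom_injective [Fintype α] (h : 2 < Fintype.card α) :
    Injective (offDiagPermHom α) := by
  classical
  refine (injective_iff_map_eq_one _).2 fun σ hσ => Equiv.ext fun i => ?_
  have hfix : ∀ j, j ≠ i → σ i = i ∨ σ i = j := fun j hj => by
    have := congrArg Subtype.val (DFunLike.congr_fun hσ ⟨s(i, j), mk_isDiag_iff.not.2 hj.symm⟩)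
    simp only [offDiagPermHom_mk, Perm.one_apply, Sym2.eq_iff] at this
    tauto
  obtain ⟨j, -, hj⟩ := Finset.exists_mem_notMem_of_card_lt_card (s := {i}) (t := .univ)
    (by simpa using h.trans' (by norm_num))
  obtain ⟨l, -, hl⟩ := Finset.exists_mem_notMem_of_card_lt_card (s := {i, j}) (t := .univ)
    ((Finset.card_le_two).trans_lt (by simpa using h))
  simp only [Finset.mem_singleton, Finset.mem_insert, not_or] at hj hl
  rcases hfix j hj with hi | hi
  · exact hi
  · rcases hfix l hl.1 with hi' | hi'
    · exact hi'
    · exact absurd (hi'.symm.trans hi) hl.2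

theorem natCard_quotient_range_offDiagPermHom [Fintype α] [DecidableEq α]
    (h : 2 < Fintype.card α) :
    (Nat.card (Perm {z : Sym2 α // ¬z.IsDiag} ⧸ (offDiagPermHom α).range) : ℚ) =
      ((Fintype.card α).choose 2).factorial / (Fintype.card α).factorial := by
  have hrange : Nat.card (offDiagPermHom α).range = (Fintype.card α).factorial := by
    rw [← Nat.card_congr (MonoidHom.ofInjective (offDiagPermHom_injective h)).toEquiv,
      Nat.card_perm, Nat.card_eq_fintype_card]
  have lagrange := Subgroup.card_eq_card_quotient_mul_card_subgroup (offDiagPermHom α).range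
  rw [hrange, Nat.card_perm, Nat.card_eq_fintype_card, card_subtype_not_diag] at lagrange
  rw [eq_div_iff (by positivity)]
  exact_mod_cast lagrange.symm

end Sym2

theorem exists_perm_comp_eq_of_range_eq {α β : Type*} [Finite α] {f g : α → β}
    (hf : Injective f) (h : Set.range g = Set.range f) : ∃ σ : Perm α, f ∘ σ = g := by
  choose u hu using fun a => h ▸ Set.mem_range_self (f := g) a
  have hsurj : Surjective u := fun b => by
    obtain ⟨a, ha⟩ := h.symm ▸ Set.mem_range_self (f := f) b
    exact ⟨a, hf ((hu a).trans ha)⟩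
  exact ⟨.ofBijective u (Finite.surjective_iff_bijective.1 hsurj), funext hu⟩

theorem Quot.finite_and_natCard_le_of_iff {X Y : Type*} [Finite Y] {r : X → X → Prop} (f : X → Y)
    (hf : ∀ a b, r a b ↔ f a = f b) : Finite (Quot r) ∧ Nat.card (Quot r) ≤ Nat.card Y := by
  let F : Quot r → Y := Quot.lift f fun a b hab => (hf a b).1 hab
  have hF : Injective F := by
    rintro ⟨a⟩ ⟨b⟩ hab
    exact Quot.sound ((hf a b).2 hab)
  exact ⟨.of_injective F hF, Nat.card_le_card_of_injective F hF⟩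

section PairInner

variable {E : Type*} [NormedAddCommGroup E] [InnerProductSpace ℝ E] {ι : Type*}

def pairInner (s : ι → E) (z : {z : Sym2 ι // ¬z.IsDiag}) : ℝ :=
  Sym2.lift ⟨fun i j => ⟪s i, s j⟫, fun _ _ => real_inner_comm _ _⟩ z

@[simp]
theorem pairInner_mk (s : ι → E) {i j : ι} (h : ¬s(i, j).IsDiag) :
    pairInner s ⟨s(i, j), h⟩ = ⟪s i, s j⟫ := rfl

theorem exists_linearIsometryEquiv_comp_iff [FiniteDimensional ℝ E] [Fintype ι] {a b : ι → E}
    {σ : Perm ι} (hnorm : ∀ i, ‖a i‖ = ‖b (σ i)‖) :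
    (∃ g : E ≃ₗᵢ[ℝ] E, ∀ i, a i = g (b (σ i))) ↔
      ∀ z, pairInner a z = pairInner b (Sym2.offDiagPermHom ι σ z) := by
  constructor
  · rintro ⟨g, hg⟩ ⟨z, hz⟩
    induction z using Sym2.ind with
    | _ i j => simp [hg]
  · intro h
    obtain ⟨g, hg⟩ := exists_linearIsometryEquiv_of_inner_eq (v := a) (w := b ∘ σ) fun i j => by
      by_cases hij : i = j
      · subst hij
        simp [hnorm]
      · exact h ⟨s(i, j), hij⟩
    exact ⟨g, fun i => (hg i).symm⟩

end PairInner

section SecondMoment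

variable {n k : ℕ}

theorem norm_eq_of_normData_eq {s t : Fin k → EuclideanSpace ℝ (Fin n)} {r : ℝ}
    (h : normData s = normData t) (ht : ∀ i, ‖t i‖ = r) (i : Fin k) : ‖s i‖ = r := by
  have hi : ‖s i‖ ∈ normData t := h ▸ Multiset.mem_map_of_mem _ (Finset.mem_univ_val i)
  obtain ⟨j, -, hj⟩ := Multiset.mem_map.1 hi
  rw [← hj, ht]

theorem range_pairInner_eq_image_pairData (s : Fin k → EuclideanSpace ℝ (Fin n)) :
    Set.range (pairInner s) = Prod.snd '' pairData s := by
  ext x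
  constructor
  · rintro ⟨⟨z, hz⟩, rfl⟩
    induction z using Sym2.ind with
    | _ i j =>
      rcases Ne.lt_or_gt hz with hij | hji
      · exact ⟨_, ⟨i, j, hij, rfl⟩, rfl⟩
      · exact ⟨_, ⟨j, i, hji, rfl⟩, real_inner_comm _ _⟩
  · rintro ⟨_, ⟨i, j, hij, rfl⟩, rfl⟩
    exact ⟨⟨s(i, j), hij.ne⟩, rfl⟩

theorem IsCollisionFree.injective_pairInner {t : Fin k → EuclideanSpace ℝ (Fin n)} {r : ℝ}
    (hcf : IsCollisionFree t) (hinj : Injective t) (ht : ∀ i, ‖t i‖ = r) :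
    Injective (pairInner t) := by
  rintro ⟨z, hz⟩ ⟨w, hw⟩ h
  induction z using Sym2.ind with
  | _ i j =>
  induction w using Sym2.ind with
  | _ l m =>
  simp only [pairInner_mk] at h
  obtain ⟨g, hg⟩ := exists_linearIsometryEquiv_of_inner_eq (v := ![t l, t m]) (w := ![t i, t j])
    (by simp [Fin.forall_fin_two, ht, h, real_inner_comm])
  have hpair := hcf i j l m hz hw ⟨g, by simpa using congrArg₂ ({·, ·}) (hg 0) (hg 1)⟩
  rw [Set.pair_eq_pair_iff, hinj.eq_iff, hinj.eq_iff, hinj.eq_iff, hinj.eq_iff] at hpair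
  exact Subtype.ext (Sym2.eq_iff.2 hpair)

end SecondMoment

theorem card_classes_le_of_sphere_general {n k : ℕ} (hk : 3 ≤ k) (r : ℝ)
    (t : Fin k → EuclideanSpace ℝ (Fin n))
    (hinj : Function.Injective t) (hsphere : ∀ i : Fin k, ‖t i‖ = r)
    (hcf : IsCollisionFree t) :
    Finite (Quot (EquivRel {s : Fin k → EuclideanSpace ℝ (Fin n) |
      Function.Injective s ∧ SameSecondMoment s t})) ∧
    ((Nat.card (Quot (EquivRel {s : Fin k → EuclideanSpace ℝ (Fin n) |
      Function.Injective s ∧ SameSecondMoment s t})) : ℚ) ≤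
      ((k.choose 2).factorial : ℚ) / (k.factorial : ℚ)) := by
  set S := {s : Fin k → EuclideanSpace ℝ (Fin n) | Function.Injective s ∧ SameSecondMoment s t}
  set H := (Sym2.offDiagPermHom (Fin k)).range
  have hnorm (s : S) : ∀ i, ‖s.1 i‖ = r := norm_eq_of_normData_eq s.2.2.1 hsphere
  have hinner := hcf.injective_pairInner hinj hsphere
  have hrange (s : S) : Set.range (pairInner s.1) = Set.range (pairInner t) := by
    rw [range_pairInner_eq_image_pairData, range_pairInner_eq_image_pairData, s.2.2.2]
  choose code hcode using fun s : S => exists_perm_comp_eq_of_range_eq hinner (hrange s)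
  -- both sides say that the pair inner products of `a` are those of `b` relabelled by `σ`
  have hrel (a b : S) : EquivRel S a b ↔ (code a : Perm _ ⧸ H) = code b := by
    rw [eq_comm, QuotientGroup.eq, EquivRel, exists_comm]
    refine exists_congr fun σ => ?_
    rw [exists_linearIsometryEquiv_comp_iff (by simp [hnorm]), eq_inv_mul_iff_mul_eq, eq_comm,
      Equiv.ext_iff]
    refine forall_congr' fun z => ?_
    rw [← congrFun (hcode a) z, ← congrFun (hcode b), comp_apply, comp_apply, hinner.eq_iff]
    rfl
  obtain ⟨hfin, hcard⟩ := Quot.finite_and_natCard_le_of_iff (fun s => (code s : Perm _ ⧸ H)) hrel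
  refine ⟨hfin, ?_⟩
  have hk' : 2 < Fintype.card (Fin k) := by rw [Fintype.card_fin]; exact hk
  calc (Nat.card (Quot (EquivRel S)) : ℚ) ≤ Nat.card (Perm _ ⧸ H) := by exact_mod_cast hcard
    _ = _ := by simpa using Sym2.natCard_quotient_range_offDiagPermHom hk'

/-- For a collision-free tuple `t` of `k ≥ 3` pairwise distinct points lying on a common sphere
of radius `r > 0`, the number of equivalence classes (under orthogonal transformation combined
with relabeling) of tuples of pairwise distinct points with the same second-moment data as `t`
is finite and bounded above by `(k choose 2)! / k!`, read as a rational number. -/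
theorem card_classes_le_of_sphere {n k : ℕ} (hk : 3 ≤ k) (r : ℝ) (hr : 0 < r)
    (t : Fin k → EuclideanSpace ℝ (Fin n))
    (hinj : Function.Injective t) (hsphere : ∀ i : Fin k, ‖t i‖ = r)
    (hcf : IsCollisionFree t) :
    Finite (Quot (EquivRel {s : Fin k → EuclideanSpace ℝ (Fin n) |
      Function.Injective s ∧ SameSecondMoment s t})) ∧
    ((Nat.card (Quot (EquivRel {s : Fin k → EuclideanSpace ℝ (Fin n) |
      Function.Injective s ∧ SameSecondMoment s t})) : ℚ) ≤
      ((k.choose 2).factorial : ℚ) / (k.factorial : ℚ)) :=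
  card_classes_le_of_sphere_general hk r t hinj hsphere hcf
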